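/- arXiv:2206.04724 — 4 statements merged into one kernel-verified Lean document; each statement's English description precedes it below -/
import Mathlib

section
/- Let (P_i)_{i∈I} and (φ_k)_{k∈K} form a network of NeSy patterns over L, with colimit construction N/~, colimit injections μ_i, and colimit edge relation E_P as above. Suppose for each x ∈ N/~ the set of labels S_x = { lab(m) : i ∈ I, m a node of P_i with μ_i(m) = x } has a greatest lower bound in L, and label the colimit node x by lab_P(x) = inf S_x. Then each colimit injection μ_i is a refinement from P_i to the resulting NeSy pattern P: it is a graph homomorphism and satisfies lab_P(μ_i(n)) ≤ lab_i(n) for every node n of P_i. -/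
/-- A NeSy pattern over a partially ordered set `L` of ontology classes:
a directed graph whose nodes are labeled by elements of `L`. -/
structure Pattern (L : Type*) [PartialOrder L] where
  V : Type*
  E : V → V → Prop
  lab : V → L

/-- A refinement between NeSy patterns is a node function that is a graph
homomorphism and makes labels smaller or equal in `L`. -/
def IsRefinement {L : Type*} [PartialOrder L] (P Q : Pattern L) (f : P.V → Q.V) : Prop :=
  (∀ a b, P.E a b → Q.E (f a) (f b)) ∧ ∀ n, Q.lab (f n) ≤ P.lab n

section Network

variable {L : Type*} [PartialOrder L] {I K : Type*}
  (P : I → Pattern L) (s t : K → I) (φ : ∀ k, (P (s k)).V → (P (t k)).V)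

/-- Disjoint union of the node sets of the patterns of a network. -/
abbrev NetNodes : Type _ := Σ i, (P i).V

/-- The relation `ν_{s k} n ~ ν_{t k} (φ k n)`; the quotient `Quot` of it
is the quotient by the equivalence relation it generates. -/
def NetRel : NetNodes P → NetNodes P → Prop :=
  fun a b => ∃ (k : K) (n : (P (s k)).V), a = ⟨s k, n⟩ ∧ b = ⟨t k, φ k n⟩

/-- Node set `N/∼` of the colimit. -/
def ColimNodes : Type _ := Quot (NetRel P s t φ)

/-- Colimit injections `μ i = q ∘ ν i`. -/
def μ (i : I) (n : (P i).V) : ColimNodes P s t φ :=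
  Quot.mk (NetRel P s t φ) ⟨i, n⟩

/-- Edge relation on the colimit: exactly the images of edges of the `P i`. -/
def ColimE : ColimNodes P s t φ → ColimNodes P s t φ → Prop :=
  fun x y => ∃ (i : I) (n₁ n₂ : (P i).V),
    (P i).E n₁ n₂ ∧ x = μ P s t φ i n₁ ∧ y = μ P s t φ i n₂

/-- The set `S_x` of labels of all nodes mapped to the colimit node `x`. -/
def labelSet (x : ColimNodes P s t φ) : Set L :=
  { l | ∃ (i : I) (m : (P i).V), μ P s t φ i m = x ∧ (P i).lab m = l }

/-- The colimit pattern, given a labeling of the colimit nodes. -/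
def ColimPattern (labP : ColimNodes P s t φ → L) : Pattern L :=
  ⟨ColimNodes P s t φ, ColimE P s t φ, labP⟩

end Network

/-- If every label set `S_x` has a greatest lower bound `labP x` in `L`, then
each colimit injection `μ i` is a refinement from `P i` into the colimit
pattern `P = (N/∼, E_P, labP)`. -/
theorem colimit_injections_are_refinements {L : Type*} [PartialOrder L] {I K : Type*}
    (P : I → Pattern L) (s t : K → I) (φ : ∀ k, (P (s k)).V → (P (t k)).V)
    (hφ : ∀ k, IsRefinement (P (s k)) (P (t k)) (φ k))
    (labP : ColimNodes P s t φ → L)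
    (hglb : ∀ x, IsGLB (labelSet P s t φ x) (labP x)) :
    ∀ i : I, IsRefinement (P i) (ColimPattern P s t φ labP) (μ P s t φ i) := by
  intro i
  constructor
  · intro a b hab
    exact ⟨i, a, b, hab, rfl, rfl⟩
  · intro n
    exact (hglb (μ P s t φ i n)).1 ⟨i, n, rfl, rfl⟩
end

section
/- Let (P_i)_{i∈I} and (φ_k)_{k∈K} form a network of NeSy patterns over L, and suppose the colimit pattern P exists, i.e., for each x ∈ N/~ the set S_x = { lab(m) : i ∈ I, m a node of P_i with μ_i(m) = x } has a greatest lower bound in L, and lab_P(x) = inf S_x. Let Q be any NeSy pattern over L together with a family of refinements ψ_i : P_i → Q satisfying ψ_{t(k)} ∘ φ_k = ψ_{s(k)} for all k ∈ K. Then there exists a refinement u : P → Q such that u ∘ μ_i = ψ_i for all i ∈ I; in particular the function u is well-defined on equivalence classes, maps colimit edges to edges of Q, and satisfies lab_Q(u(x)) ≤ lab_P(x) for every colimit node x. -/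
/-- Existence of the mediating refinement: every cocone of refinements
`ψ i : P i → Q` over the network factors through the colimit pattern. -/
theorem colimit_mediating_exists {L : Type*} [PartialOrder L] {I K : Type*}
    (P : I → Pattern L) (s t : K → I) (φ : ∀ k, (P (s k)).V → (P (t k)).V)
    (hφ : ∀ k, IsRefinement (P (s k)) (P (t k)) (φ k))
    (labP : ColimNodes P s t φ → L)
    (hglb : ∀ x, IsGLB (labelSet P s t φ x) (labP x))
    (Q : Pattern L) (ψ : ∀ i, (P i).V → Q.V)
    (hψ : ∀ i, IsRefinement (P i) Q (ψ i))
    (hcoc : ∀ k : K, ψ (t k) ∘ φ k = ψ (s k)) :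
    ∃ u : ColimNodes P s t φ → Q.V,
      IsRefinement (ColimPattern P s t φ labP) Q u ∧
      ∀ i : I, u ∘ μ P s t φ i = ψ i := by
  refine ⟨Quot.lift (fun a : NetNodes P => ψ a.1 a.2) ?_, ⟨?_, ?_⟩, fun i => rfl⟩
  · rintro a b ⟨k, n, rfl, rfl⟩
    exact (congrFun (hcoc k) n).symm
  · rintro x y ⟨i, n₁, n₂, he, rfl, rfl⟩
    exact (hψ i).1 _ _ he
  · intro x
    induction x using Quot.ind with
    | _ a =>
      refine (hglb (Quot.mk _ a)).2 (fun l hl => ?_)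
      obtain ⟨i, m, hm, rfl⟩ := hl
      rw [← hm]
      exact (hψ i).2 m
end

section
/- (Main proposition.) Let (P_i)_{i∈I} and (φ_k)_{k∈K} form a network of NeSy patterns over L, and suppose that for every x ∈ N/~ the set of labels S_x = { lab(m) : i ∈ I, m a node of P_i with μ_i(m) = x } has a greatest lower bound in L. Then the NeSy pattern P with node set N/~, edge relation E_P, and labeling lab_P(x) = inf S_x, together with the injections μ_i, is a colimit of the network in the category of NeSy patterns over L and refinements: each μ_i is a refinement, μ_{t(k)} ∘ φ_k = μ_{s(k)} for all k ∈ K, and for every NeSy pattern Q with refinements ψ_i : P_i → Q satisfying ψ_{t(k)} ∘ φ_k = ψ_{s(k)} there is a unique refinement u : P → Q with u ∘ μ_i = ψ_i for all i ∈ I. -/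
/-- Main proposition: if every label set `S_x` has a greatest lower bound,
then the pattern `(N/∼, E_P, labP)` with injections `μ i` is a colimit of the
network in the category of NeSy patterns over `L` and refinements. -/
theorem colimit_construction_is_colimit {L : Type*} [PartialOrder L] {I K : Type*}
    (P : I → Pattern L) (s t : K → I) (φ : ∀ k, (P (s k)).V → (P (t k)).V)
    (hφ : ∀ k, IsRefinement (P (s k)) (P (t k)) (φ k))
    (labP : ColimNodes P s t φ → L)
    (hglb : ∀ x, IsGLB (labelSet P s t φ x) (labP x)) :
    (∀ i : I, IsRefinement (P i) (ColimPattern P s t φ labP) (μ P s t φ i)) ∧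
    (∀ k : K, μ P s t φ (t k) ∘ φ k = μ P s t φ (s k)) ∧
    (∀ (Q : Pattern L) (ψ : ∀ i, (P i).V → Q.V),
      (∀ i, IsRefinement (P i) Q (ψ i)) →
      (∀ k : K, ψ (t k) ∘ φ k = ψ (s k)) →
      ∃! u : ColimNodes P s t φ → Q.V,
        IsRefinement (ColimPattern P s t φ labP) Q u ∧
        ∀ i : I, u ∘ μ P s t φ i = ψ i) := by
  refine ⟨?_, ?_, ?_⟩
  · intro i
    constructor
    · intro a b h
      exact ⟨i, a, b, h, rfl, rfl⟩
    · intro n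
      exact (hglb (μ P s t φ i n)).1 ⟨i, n, rfl, rfl⟩
  · intro k
    funext n
    exact (Quot.sound ⟨k, n, rfl, rfl⟩).symm
  · intro Q ψ hψ hcomm
    refine ⟨Quot.lift (fun p : NetNodes P => ψ p.1 p.2) ?_, ⟨⟨?_, ?_⟩, ?_⟩, ?_⟩
    · rintro a b ⟨k, n, rfl, rfl⟩
      exact (congrFun (hcomm k) n).symm
    · rintro x y ⟨i, n₁, n₂, hE, rfl, rfl⟩
      exact (hψ i).1 n₁ n₂ hE
    · intro x
      refine (hglb x).2 ?_
      rintro l ⟨i, m, rfl, rfl⟩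
      exact (hψ i).2 m
    · intro i; rfl
    · rintro u ⟨_, hc⟩
      funext x
      induction x using Quot.ind with
      | _ p => exact congrFun (hc p.1) p.2
end

section
/- If the label partial order L is a complete lattice (so that every subset of L has an infimum), then every network of NeSy patterns over L and refinements has a colimit in the category of NeSy patterns over L and refinements; the colimit is given by the quotient construction with node set N/~, edge relation E_P, labeling lab_P(x) = inf{ lab(m) : i ∈ I, m a node of P_i with μ_i(m) = x }, and colimit injections μ_i. -/
/-- If `L` is a complete lattice, then every network of NeSy patterns over `L`
has a colimit, given by the quotient construction with labeling
`labP x = sInf S_x` and colimit injections `μ i`. -/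
theorem colimit_exists_of_completeLattice {L : Type*} [CompleteLattice L] {I K : Type*}
    (P : I → Pattern L) (s t : K → I) (φ : ∀ k, (P (s k)).V → (P (t k)).V)
    (hφ : ∀ k, IsRefinement (P (s k)) (P (t k)) (φ k)) :
    (∀ i : I, IsRefinement (P i)
        (ColimPattern P s t φ (fun x => sInf (labelSet P s t φ x))) (μ P s t φ i)) ∧
    (∀ k : K, μ P s t φ (t k) ∘ φ k = μ P s t φ (s k)) ∧
    (∀ (Q : Pattern L) (ψ : ∀ i, (P i).V → Q.V),
      (∀ i, IsRefinement (P i) Q (ψ i)) →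
      (∀ k : K, ψ (t k) ∘ φ k = ψ (s k)) →
      ∃! u : ColimNodes P s t φ → Q.V,
        IsRefinement (ColimPattern P s t φ (fun x => sInf (labelSet P s t φ x))) Q u ∧
        ∀ i : I, u ∘ μ P s t φ i = ψ i) := by
  refine ⟨?_, ?_, ?_⟩
  · intro i
    constructor
    · intro a b hab
      exact ⟨i, a, b, hab, rfl, rfl⟩
    · intro n
      exact sInf_le ⟨i, n, rfl, rfl⟩
  · intro k
    funext n
    exact (Quot.sound ⟨k, n, rfl, rfl⟩).symm
  · intro Q ψ hψ hcomp
    refine ⟨Quot.lift (fun a : NetNodes P => ψ a.1 a.2) ?_, ⟨⟨?_, ?_⟩, ?_⟩, ?_⟩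
    · rintro a b ⟨k, n, rfl, rfl⟩
      exact (congrFun (hcomp k) n).symm
    · rintro x y ⟨i, n₁, n₂, he, rfl, rfl⟩
      exact (hψ i).1 n₁ n₂ he
    · intro x
      refine le_sInf ?_
      rintro l ⟨i, m, rfl, rfl⟩
      exact (hψ i).2 m
    · intro i; rfl
    · intro u' ⟨_, hu'⟩
      funext x
      induction x using Quot.ind with
      | _ a => exact congrFun (hu' a.1) a.2
end
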